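/- Let p ∈ (0,1), let n be a positive integer, and let (ξ_i)_{i≥1} be i.i.d. random variables with the Binomial(n,p) distribution. Set S_0 = 1 and S_t = 1 + Σ_{i=1}^{t}(ξ_i − 1), fix an integer H > 0, and let γ = min{t ≥ 1 : S_t ≥ H or S_t = 0}. Let Ξ be a set of positive integers such that the event {S_γ ≥ H and γ ∈ Ξ} has positive probability. Then the conditional distribution of the overshoot S_γ − H given {S_γ ≥ H, γ ∈ Ξ} is stochastically dominated by the Binomial(n,p) distribution; that is, for every integer k ≥ 0, P(S_γ − H ≥ k | S_γ ≥ H, γ ∈ Ξ) ≤ P(X ≥ k), where X is a Binomial(n,p) random variable. -/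

import Mathlib

/-!
Split the event `{S_γ ≥ H, γ = t ∈ Ξ}` according to `m = H + 1 - S_{t-1}`: given the past up to
time `t - 1` (on which the walk stays in `(0, H)`), the walk exits upwards at time `t` with
overshoot at least `k` exactly when `ξ_t ≥ m + k`. As `ξ_t` is independent of the past, each piece
contributes `P(past) · P(X ≥ m + k) ≤ P(past) · P(X ≥ m) · P(X ≥ k)`, by the new-better-than-used
property of the binomial tail `T_n(k) = P(X ≥ k)`. That property follows by induction on `n` from
Pascal's rule `T_{n+1}(k+1) = p T_n(k) + (1 - p) T_n(k+1)`.
-/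

open MeasureTheory ProbabilityTheory
open scoped ENNReal

/-- The Binomial(n,p) distribution, as a measure on `ℕ`. -/
noncomputable def binomialMeasure (n : ℕ) (p : ℝ) : Measure ℕ :=
  Measure.sum fun k : ℕ =>
    (ENNReal.ofReal ((n.choose k : ℝ) * p ^ k * (1 - p) ^ (n - k))) • Measure.dirac k

/-- The random walk `S_t = 1 + ∑_{i=1}^t (ξ_i - 1)`. -/
def walk {Ω : Type*} (ξ : ℕ → Ω → ℕ) (t : ℕ) (ω : Ω) : ℤ :=
  1 + ∑ i ∈ Finset.Icc 1 t, ((ξ i ω : ℤ) - 1)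

/-- The stopping time `γ = min {t ≥ 1 : S_t ≥ H or S_t = 0}`. -/
noncomputable def hitTime {Ω : Type*} (ξ : ℕ → Ω → ℕ) (H : ℕ) (ω : Ω) : ℕ :=
  sInf {t | 1 ≤ t ∧ ((H : ℤ) ≤ walk ξ t ω ∨ walk ξ t ω = 0)}

noncomputable def binomialWeight (p : ℝ) (n i : ℕ) : ℝ :=
  (n.choose i : ℝ) * p ^ i * (1 - p) ^ (n - i)

noncomputable def binomialTail (p : ℝ) (n k : ℕ) : ℝ :=
  ∑ i ∈ Finset.Ico k (n + 1), binomialWeight p n i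

section Binomial

variable {p : ℝ}

lemma binomialWeight_eq_zero_of_lt {n i : ℕ} (h : n < i) : binomialWeight p n i = 0 := by
  simp [binomialWeight, Nat.choose_eq_zero_of_lt h]

lemma binomialWeight_succ_succ (n i : ℕ) :
    binomialWeight p (n + 1) (i + 1) =
      p * binomialWeight p n i + (1 - p) * binomialWeight p n (i + 1) := by
  rcases lt_or_ge i n with hi | hi
  · obtain ⟨d, rfl⟩ := Nat.exists_eq_add_of_lt hi
    simp only [binomialWeight, Nat.choose_succ_succ, show i + d + 1 + 1 - (i + 1) = d + 1 by omega,
      show i + d + 1 - i = d + 1 by omega, show i + d + 1 - (i + 1) = d by omega]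
    push_cast
    ring
  · simp [binomialWeight, Nat.choose_succ_succ, Nat.choose_eq_zero_of_lt (Nat.lt_succ_of_le hi),
      show n + 1 - (i + 1) = n - i by omega]
    ring

lemma binomialTail_eq_sum_Ico {n N : ℕ} (hN : n ≤ N) (k : ℕ) :
    binomialTail p n k = ∑ i ∈ Finset.Ico k (N + 1), binomialWeight p n i := by
  refine Finset.sum_subset (Finset.Ico_subset_Ico_right (by omega)) fun i hi hin => ?_
  simp only [Finset.mem_Ico] at hi hin
  exact binomialWeight_eq_zero_of_lt (by omega)

lemma binomialTail_zero (n : ℕ) : binomialTail p n 0 = 1 := by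
  rw [binomialTail, ← Finset.range_eq_Ico]
  calc ∑ i ∈ Finset.range (n + 1), binomialWeight p n i
      = ∑ i ∈ Finset.range (n + 1), p ^ i * (1 - p) ^ (n - i) * n.choose i :=
        Finset.sum_congr rfl fun i _ => by rw [binomialWeight]; ring
    _ = 1 := by rw [← add_pow, add_sub_cancel, one_pow]

lemma binomialTail_succ_succ (n k : ℕ) :
    binomialTail p (n + 1) (k + 1) = p * binomialTail p n k + (1 - p) * binomialTail p n (k + 1) := by
  rw [binomialTail, ← Finset.sum_Ico_add', binomialTail_eq_sum_Ico (Nat.le_succ n) (k + 1),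
    ← Finset.sum_Ico_add', binomialTail, Finset.mul_sum, Finset.mul_sum, ← Finset.sum_add_distrib]
  exact Finset.sum_congr rfl fun i _ => binomialWeight_succ_succ n i

variable (hp0 : 0 ≤ p) (hp1 : p ≤ 1)
include hp0 hp1

lemma binomialWeight_nonneg (n i : ℕ) : 0 ≤ binomialWeight p n i := by
  have : 0 ≤ 1 - p := by linarith
  unfold binomialWeight
  positivity

lemma binomialTail_nonneg (n k : ℕ) : 0 ≤ binomialTail p n k :=
  Finset.sum_nonneg fun i _ => binomialWeight_nonneg hp0 hp1 n i

lemma binomialTail_antitone (n : ℕ) : Antitone (binomialTail p n) := fun _ _ hkl =>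
  Finset.sum_le_sum_of_subset_of_nonneg (Finset.Ico_subset_Ico_left hkl)
    fun i _ _ => binomialWeight_nonneg hp0 hp1 n i

lemma binomialTail_le_succ (n k : ℕ) : binomialTail p n k ≤ binomialTail p (n + 1) k := by
  cases k with
  | zero => rw [binomialTail_zero, binomialTail_zero]
  | succ k =>
    rw [binomialTail_succ_succ]
    nlinarith [binomialTail_antitone hp0 hp1 n k.le_succ, binomialTail_nonneg hp0 hp1 n (k + 1)]

lemma binomialTail_add_le_mul (n a b : ℕ) :
    binomialTail p n (a + b) ≤ binomialTail p n a * binomialTail p n b := by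
  induction n generalizing a b with
  | zero =>
    rcases Nat.eq_zero_or_pos a with rfl | ha
    · simp [binomialTail_zero]
    · rw [binomialTail, Finset.Ico_eq_empty (by omega), Finset.sum_empty]
      exact mul_nonneg (binomialTail_nonneg hp0 hp1 _ _) (binomialTail_nonneg hp0 hp1 _ _)
  | succ n ih =>
    cases a with
    | zero => simp [binomialTail_zero]
    | succ a =>
      cases b with
      | zero => simp [binomialTail_zero]
      | succ b =>
        have hq : 0 ≤ 1 - p := by linarith
        have hb := binomialTail_nonneg hp0 hp1 n (b + 1)
        calc binomialTail p (n + 1) (a + 1 + (b + 1))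
            = p * binomialTail p n (a + (b + 1)) + (1 - p) * binomialTail p n (a + 1 + (b + 1)) := by
              rw [show a + 1 + (b + 1) = a + (b + 1) + 1 by omega, binomialTail_succ_succ]
          _ ≤ p * (binomialTail p n a * binomialTail p n (b + 1))
              + (1 - p) * (binomialTail p n (a + 1) * binomialTail p n (b + 1)) := by
              gcongr <;> apply ih
          _ = binomialTail p (n + 1) (a + 1) * binomialTail p n (b + 1) := by
              rw [binomialTail_succ_succ]; ring
          _ ≤ binomialTail p (n + 1) (a + 1) * binomialTail p (n + 1) (b + 1) :=
              mul_le_mul_of_nonneg_left (binomialTail_le_succ hp0 hp1 n (b + 1))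
                (binomialTail_nonneg hp0 hp1 _ _)

lemma binomialMeasure_Ici (n k : ℕ) :
    binomialMeasure n p (Set.Ici k) = ENNReal.ofReal (binomialTail p n k) := by
  have hterm : ∀ i, (ENNReal.ofReal (binomialWeight p n i) • Measure.dirac i) (Set.Ici k)
      = if i ∈ Finset.Ico k (n + 1) then ENNReal.ofReal (binomialWeight p n i) else 0 := by
    intro i
    rcases lt_or_ge n i with hni | hin
    · simp [binomialWeight_eq_zero_of_lt hni]
    · simp [Set.indicator, Nat.lt_succ_of_le hin]
  rw [binomialMeasure, Measure.sum_apply _ measurableSet_Ici]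
  refine (tsum_congr hterm).trans ?_
  rw [tsum_eq_sum (s := Finset.Ico k (n + 1)) (fun i hi => if_neg hi),
    Finset.sum_ite_mem, Finset.inter_self, binomialTail,
    ENNReal.ofReal_sum_of_nonneg fun i _ => binomialWeight_nonneg hp0 hp1 n i]

lemma binomialMeasure_Ici_add_le_mul (n a b : ℕ) :
    binomialMeasure n p (Set.Ici (a + b)) ≤
      binomialMeasure n p (Set.Ici a) * binomialMeasure n p (Set.Ici b) := by
  simp only [binomialMeasure_Ici hp0 hp1]
  rw [← ENNReal.ofReal_mul (binomialTail_nonneg hp0 hp1 n a)]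
  exact ENNReal.ofReal_le_ofReal (binomialTail_add_le_mul hp0 hp1 n a b)

end Binomial

section Walk

variable {Ω : Type*} {ξ : ℕ → Ω → ℕ} {H : ℕ} {ω : Ω}

lemma walk_zero (ξ : ℕ → Ω → ℕ) (ω : Ω) : walk ξ 0 ω = 1 := by simp [walk]

lemma walk_succ (ξ : ℕ → Ω → ℕ) (t : ℕ) (ω : Ω) :
    walk ξ (t + 1) ω = walk ξ t ω + ξ (t + 1) ω - 1 := by
  rw [walk, walk, Finset.sum_Icc_succ_top (by omega)]
  ring

lemma walk_congr {t : ℕ} {ω' : Ω} (h : ∀ i ∈ Finset.Icc 1 t, ξ i ω = ξ i ω') :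
    walk ξ t ω = walk ξ t ω' := by
  simp only [walk]
  rw [Finset.sum_congr rfl fun i hi => by rw [h i hi]]

lemma hitTime_eq_of_le_walk {t : ℕ} (ht : 1 ≤ t)
    (hbefore : ∀ u ∈ Finset.Ico 1 t, walk ξ u ω < H ∧ walk ξ u ω ≠ 0)
    (hH : (H : ℤ) ≤ walk ξ t ω) : hitTime ξ H ω = t := by
  have htmem : t ∈ {t | 1 ≤ t ∧ ((H : ℤ) ≤ walk ξ t ω ∨ walk ξ t ω = 0)} := ⟨ht, Or.inl hH⟩
  refine le_antisymm (Nat.sInf_le htmem) (not_lt.1 fun hlt => ?_)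
  obtain ⟨h1, h2⟩ := Nat.sInf_mem ⟨t, htmem⟩
  have := hbefore _ (Finset.mem_Ico.2 ⟨h1, hlt⟩)
  omega

lemma one_le_hitTime_and_forall_of_le_walk (hH : (H : ℤ) ≤ walk ξ (hitTime ξ H ω) ω) :
    1 ≤ hitTime ξ H ω ∧
      ∀ u ∈ Finset.Ico 1 (hitTime ξ H ω), walk ξ u ω < H ∧ walk ξ u ω ≠ 0 := by
  have hne : {t | 1 ≤ t ∧ ((H : ℤ) ≤ walk ξ t ω ∨ walk ξ t ω = 0)}.Nonempty := by
    by_contra hempty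
    rw [Set.not_nonempty_iff_eq_empty] at hempty
    rw [hitTime, hempty, Nat.sInf_empty, walk_zero] at hH
    -- at time 1 the walk is `ξ 1 ≥ 0`, so it is absorbed at `0` or already at `1 ≥ H`
    have h1 : 1 ∈ {t | 1 ≤ t ∧ ((H : ℤ) ≤ walk ξ t ω ∨ walk ξ t ω = 0)} := by
      simp only [Set.mem_ofPred_eq, walk_succ, walk_zero]
      omega
    simp [hempty] at h1
  refine ⟨(Nat.sInf_mem hne).1, fun u hu => ?_⟩
  rw [Finset.mem_Ico] at hu
  have := Nat.notMem_of_lt_sInf hu.2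
  simp only [Set.mem_ofPred_eq, not_and, not_or] at this
  exact ⟨not_le.1 (this hu.1).1, (this hu.1).2⟩

end Walk

section Independence

variable {Ω β : Type*} {ξ : ℕ → Ω → β} {t : ℕ} {A : Set Ω}

def IsDeterminedBefore (ξ : ℕ → Ω → β) (t : ℕ) (A : Set Ω) : Prop :=
  ∀ ω ω', (∀ j < t, ξ j ω = ξ j ω') → ω ∈ A → ω' ∈ A

lemma IsDeterminedBefore.preimage_image_eq (hA : IsDeterminedBefore ξ t A) :
    (fun ω (j : Finset.range t) => ξ j ω) ⁻¹' ((fun ω (j : Finset.range t) => ξ j ω) '' A) = A :=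
  Set.Subset.antisymm
    (fun ω ⟨ω', hω', he⟩ => hA ω' ω (fun j hj => congrFun he ⟨j, Finset.mem_range.2 hj⟩) hω')
    (Set.subset_preimage_image _ _)

variable [MeasurableSpace Ω] [MeasurableSpace β] [Countable β] [MeasurableSingletonClass β]
  {μ : Measure Ω}

lemma IsDeterminedBefore.measurableSet (hmeas : ∀ i, Measurable (ξ i))
    (hA : IsDeterminedBefore ξ t A) : MeasurableSet A := by
  rw [← hA.preimage_image_eq]
  exact measurable_pi_lambda (fun ω (j : Finset.range t) => ξ j ω) (fun j => hmeas j)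
    (Set.to_countable _).measurableSet

lemma IsDeterminedBefore.measure_inter_preimage_eq_mul (hmeas : ∀ i, Measurable (ξ i))
    (hindep : iIndepFun ξ μ) (hA : IsDeterminedBefore ξ t A) {B : Set β} (hB : MeasurableSet B) :
    μ (A ∩ ξ t ⁻¹' B) = μ A * μ (ξ t ⁻¹' B) := by
  have hpast_indep := (hindep.indepFun_finset (Finset.range t) {t} (by simp) hmeas).comp
    measurable_id (measurable_pi_apply ⟨t, Finset.mem_singleton_self t⟩)
  rw [← hA.preimage_image_eq]
  exact hpast_indep.measure_inter_preimage_eq_mul _ _ (Set.to_countable _).measurableSet hB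

end Independence

lemma cond_apply_le_of_measure_inter_le {Ω : Type*} [MeasurableSpace Ω] {μ : Measure Ω}
    {s t : Set Ω} (hs : MeasurableSet s) {c : ℝ≥0∞} (h : μ (s ∩ t) ≤ c * μ s) : μ[t|s] ≤ c := by
  rw [cond_apply hs]
  calc (μ s)⁻¹ * μ (s ∩ t) ≤ (μ s)⁻¹ * (c * μ s) := by gcongr
    _ = c * ((μ s)⁻¹ * μ s) := by ring
    _ ≤ c := mul_le_of_le_one_right' (ENNReal.inv_mul_le_one _)

section Overshoot

variable {Ω : Type*} {ξ : ℕ → Ω → ℕ} {H : ℕ} {Ξ : Set ℕ} {t m : ℕ} {ω : Ω}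

/-- On `beforeHit ξ H Ξ t m` the walk has avoided `0` and `[H, ∞)` up to time `t - 1`, where it
sits at `H + 1 - m`; so there `γ = t` and `S_γ ≥ H + k` exactly when `ξ t ≥ m + k`. -/
def beforeHit (ξ : ℕ → Ω → ℕ) (H : ℕ) (Ξ : Set ℕ) (t m : ℕ) : Set Ω :=
  {ω | t ∈ Ξ ∧ 1 ≤ t ∧ (∀ u ∈ Finset.Ico 1 t, walk ξ u ω < H ∧ walk ξ u ω ≠ 0) ∧
    walk ξ (t - 1) ω + m = H + 1}

lemma isDeterminedBefore_beforeHit : IsDeterminedBefore ξ t (beforeHit ξ H Ξ t m) := by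
  rintro ω ω' h ⟨hΞ, ht, hbefore, hlast⟩
  have hwalk : ∀ u < t, walk ξ u ω = walk ξ u ω' := fun u hu =>
    walk_congr fun i hi => h i (by rw [Finset.mem_Icc] at hi; omega)
  refine ⟨hΞ, ht, fun u hu => ?_, ?_⟩
  · rw [← hwalk u (Finset.mem_Ico.1 hu).2]
    exact hbefore u hu
  · rwa [← hwalk _ (by omega)]

lemma walk_eq_of_mem_beforeHit (h : ω ∈ beforeHit ξ H Ξ t m) :
    walk ξ t ω = H + ξ t ω - m := by
  obtain ⟨-, ht, -, hlast⟩ := h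
  obtain ⟨s, rfl⟩ := Nat.exists_eq_add_of_le' ht
  rw [Nat.add_sub_cancel] at hlast
  rw [walk_succ]
  omega

lemma hitTime_eq_of_mem_beforeHit (h : ω ∈ beforeHit ξ H Ξ t m) (hm : m ≤ ξ t ω) :
    hitTime ξ H ω = t :=
  hitTime_eq_of_le_walk h.2.1 h.2.2.1 (by rw [walk_eq_of_mem_beforeHit h]; omega)

def overshootEvent (ξ : ℕ → Ω → ℕ) (H : ℕ) (Ξ : Set ℕ) (k : ℕ) : Set Ω :=
  {ω | hitTime ξ H ω ∈ Ξ ∧ ((H + k : ℕ) : ℤ) ≤ walk ξ (hitTime ξ H ω) ω}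

lemma overshootEvent_eq_iUnion (ξ : ℕ → Ω → ℕ) (H : ℕ) (Ξ : Set ℕ) (k : ℕ) :
    overshootEvent ξ H Ξ k =
      ⋃ i : ℕ × ℕ, beforeHit ξ H Ξ i.1 i.2 ∩ ξ i.1 ⁻¹' Set.Ici (i.2 + k) := by
  ext ω
  simp only [overshootEvent, Set.mem_ofPred_eq, Set.mem_iUnion, Set.mem_inter_iff, Set.mem_preimage,
    Set.mem_Ici, Prod.exists]
  constructor
  · rintro ⟨hΞ, hk⟩
    have hH : (H : ℤ) ≤ walk ξ (hitTime ξ H ω) ω := by omega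
    obtain ⟨ht, hbefore⟩ := one_le_hitTime_and_forall_of_le_walk hH
    set t := hitTime ξ H ω
    have hprev : walk ξ (t - 1) ω ≤ H + 1 := by
      rcases Nat.lt_or_ge 1 t with h | h
      · exact (hbefore (t - 1) (Finset.mem_Ico.2 ⟨by omega, by omega⟩)).1.le.trans (by omega)
      · rw [show t - 1 = 0 by omega, walk_zero]
        omega
    have hstep := walk_succ ξ (t - 1) ω
    rw [Nat.sub_add_cancel ht] at hstep
    exact ⟨t, (H + 1 - walk ξ (t - 1) ω).toNat, ⟨hΞ, ht, hbefore, by omega⟩, by omega⟩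
  · rintro ⟨t, m, hmem, hξ⟩
    rw [hitTime_eq_of_mem_beforeHit hmem (by omega), walk_eq_of_mem_beforeHit hmem]
    exact ⟨hmem.1, by omega⟩

lemma pairwise_disjoint_beforeHit_inter (k : ℕ) :
    Pairwise (Function.onFun Disjoint
      fun i : ℕ × ℕ => beforeHit ξ H Ξ i.1 i.2 ∩ ξ i.1 ⁻¹' Set.Ici (i.2 + k)) := by
  rintro ⟨t, m⟩ ⟨t', m'⟩ hne
  refine Set.disjoint_left.2 fun ω ⟨hmem, hξ⟩ ⟨hmem', hξ'⟩ => hne ?_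
  dsimp only at hmem hmem' hξ hξ'
  rw [Set.mem_preimage, Set.mem_Ici] at hξ hξ'
  obtain rfl : t = t' := (hitTime_eq_of_mem_beforeHit hmem (by omega)).symm.trans
    (hitTime_eq_of_mem_beforeHit hmem' (by omega))
  have := hmem.2.2.2
  have := hmem'.2.2.2
  congr 1
  omega

variable [MeasurableSpace Ω] {μ : Measure Ω} {ν : Measure ℕ}

lemma measurableSet_overshootEvent (hmeas : ∀ i, Measurable (ξ i)) (k : ℕ) :
    MeasurableSet (overshootEvent ξ H Ξ k) := by
  rw [overshootEvent_eq_iUnion]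
  exact MeasurableSet.iUnion fun _ =>
    (isDeterminedBefore_beforeHit.measurableSet hmeas).inter (hmeas _ measurableSet_Ici)

lemma measure_overshootEvent (hmeas : ∀ i, Measurable (ξ i))
    (hdist : ∀ i, μ.map (ξ i) = ν) (hindep : iIndepFun ξ μ) (k : ℕ) :
    μ (overshootEvent ξ H Ξ k) =
      ∑' i : ℕ × ℕ, μ (beforeHit ξ H Ξ i.1 i.2) * ν (Set.Ici (i.2 + k)) := by
  rw [overshootEvent_eq_iUnion, measure_iUnion (pairwise_disjoint_beforeHit_inter k)
    fun _ => (isDeterminedBefore_beforeHit.measurableSet hmeas).inter (hmeas _ measurableSet_Ici)]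
  refine tsum_congr fun i => ?_
  rw [isDeterminedBefore_beforeHit.measure_inter_preimage_eq_mul hmeas hindep measurableSet_Ici,
    ← Measure.map_apply (hmeas _) measurableSet_Ici, hdist]

lemma measure_overshootEvent_le (hmeas : ∀ i, Measurable (ξ i))
    (hdist : ∀ i, μ.map (ξ i) = ν) (hindep : iIndepFun ξ μ)
    (hν : ∀ a b, ν (Set.Ici (a + b)) ≤ ν (Set.Ici a) * ν (Set.Ici b)) (k : ℕ) :
    μ (overshootEvent ξ H Ξ k) ≤ ν (Set.Ici k) * μ (overshootEvent ξ H Ξ 0) := by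
  rw [measure_overshootEvent hmeas hdist hindep,
    measure_overshootEvent hmeas hdist hindep, ← ENNReal.tsum_mul_left]
  refine ENNReal.tsum_le_tsum fun i => ?_
  calc μ (beforeHit ξ H Ξ i.1 i.2) * ν (Set.Ici (i.2 + k))
      ≤ μ (beforeHit ξ H Ξ i.1 i.2) * (ν (Set.Ici i.2) * ν (Set.Ici k)) := by gcongr; exact hν _ _
    _ = ν (Set.Ici k) * (μ (beforeHit ξ H Ξ i.1 i.2) * ν (Set.Ici (i.2 + 0))) := by
      rw [add_zero]; ring

end Overshoot

theorem overshoot_dominated_general {Ω : Type*} [MeasurableSpace Ω] (μ : Measure Ω)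
    (n : ℕ) (p : ℝ) (hp0 : 0 < p) (hp1 : p < 1)
    (ξ : ℕ → Ω → ℕ) (hmeas : ∀ i, Measurable (ξ i))
    (hdist : ∀ i, μ.map (ξ i) = binomialMeasure n p)
    (hindep : iIndepFun ξ μ)
    (H : ℕ) (Ξ : Set ℕ)
    (k : ℕ) :
    (μ[|{ω | (H : ℤ) ≤ walk ξ (hitTime ξ H ω) ω ∧ hitTime ξ H ω ∈ Ξ}])
        {ω | (k : ℤ) ≤ walk ξ (hitTime ξ H ω) ω - H} ≤
      binomialMeasure n p {m | k ≤ m} := by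
  have hE : {ω | (H : ℤ) ≤ walk ξ (hitTime ξ H ω) ω ∧ hitTime ξ H ω ∈ Ξ} =
      overshootEvent ξ H Ξ 0 := by
    ext ω
    simp only [overshootEvent, Set.mem_ofPred_eq, add_zero, and_comm]
  have hEG : {ω | (H : ℤ) ≤ walk ξ (hitTime ξ H ω) ω ∧ hitTime ξ H ω ∈ Ξ} ∩
        {ω | (k : ℤ) ≤ walk ξ (hitTime ξ H ω) ω - H} = overshootEvent ξ H Ξ k := by
    ext ω
    simp only [overshootEvent, Set.mem_inter_iff, Set.mem_ofPred_eq]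
    constructor
    · rintro ⟨⟨-, hΞ⟩, hk⟩
      exact ⟨hΞ, by omega⟩
    · rintro ⟨hΞ, hk⟩
      exact ⟨⟨by omega, hΞ⟩, by omega⟩
  refine cond_apply_le_of_measure_inter_le (hE ▸ measurableSet_overshootEvent hmeas 0) ?_
  rw [hEG, hE]
  exact measure_overshootEvent_le hmeas hdist hindep
    (binomialMeasure_Ici_add_le_mul hp0.le hp1.le n) k

/-- **Lemma 5, Nachmias–Peres.** Given `{S_γ ≥ H, γ ∈ Ξ}`, the overshoot `S_γ - H` is
stochastically dominated by the Binomial(n,p) distribution. -/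
theorem overshoot_dominated {Ω : Type*} [MeasurableSpace Ω] (μ : Measure Ω)
    [IsProbabilityMeasure μ] (n : ℕ) (hn : 0 < n) (p : ℝ) (hp0 : 0 < p) (hp1 : p < 1)
    (ξ : ℕ → Ω → ℕ) (hmeas : ∀ i, Measurable (ξ i))
    (hdist : ∀ i, μ.map (ξ i) = binomialMeasure n p)
    (hindep : iIndepFun ξ μ)
    (H : ℕ) (hH : 0 < H) (Ξ : Set ℕ) (hΞ : ∀ t ∈ Ξ, 0 < t)
    (hpos : 0 < μ {ω | (H : ℤ) ≤ walk ξ (hitTime ξ H ω) ω ∧ hitTime ξ H ω ∈ Ξ})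
    (k : ℕ) :
    (μ[|{ω | (H : ℤ) ≤ walk ξ (hitTime ξ H ω) ω ∧ hitTime ξ H ω ∈ Ξ}])
        {ω | (k : ℤ) ≤ walk ξ (hitTime ξ H ω) ω - H} ≤
      binomialMeasure n p {m | k ≤ m} :=
  overshoot_dominated_general μ n p hp0 hp1 ξ hmeas hdist hindep H Ξ k
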